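/- arXiv:1703.01578 — 5 statements merged into one kernel-verified Lean document; each statement's English description precedes it below -/
import Mathlib

section
/- For a pointed topological space (X,x) and integers n ≥ 1 and 1 ≤ k ≤ n−1, the n-th quasitopological homotopy group π_n^{qtop}(X,x) is isomorphic as a quasitopological group to π_{n−k}^{qtop}(Ω^k(X,x), e_x), where e_x is the constant k-loop at x. -/
open Topology.Homotopy unitInterval

noncomputable section

/-- The quotient topology on `πₙ(X,x)` induced by the natural surjection
`q : Ωⁿ(X,x) → πₙ(X,x)` from the `n`-th loop space (with the compact-open topology);
with this topology `πₙ(X,x)` is the quasitopological homotopy group `πₙ^{qtop}(X,x)`. -/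
instance piQTop (N X : Type*) [TopologicalSpace X] (x : X) :
    TopologicalSpace (HomotopyGroup N X x) :=
  inferInstanceAs (TopologicalSpace (Quotient _))

/-!
A homotopy rel boundary between generalized loops is the same thing as a path in the loop space,
so any homeomorphism of loop spaces respects the homotopy relation and descends to a
homeomorphism of homotopy groups with their quotient topologies. Relabelling coordinates and
currying give a homeomorphism `Ω^(n-k)(Ω^k(X,x), e_x) ≃ₜ Ωⁿ(X,x)` which carries concatenation in
an outer coordinate to concatenation in the corresponding coordinate, so the induced map is
multiplicative.
-/

open Topology

namespace GenLoop

variable {M N X : Type*} [TopologicalSpace X] {x : X}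

theorem homotopic_iff_joined {p q : Ω^ N X x} : Homotopic p q ↔ Joined p q := by
  constructor
  · rintro ⟨H⟩
    refine ⟨⟨⟨fun t => ⟨H.curry t, fun y hy => (H.eq_fst t hy).trans (p.2 y hy)⟩,
      H.toContinuousMap.curry.continuous.subtype_mk _⟩, ?_, ?_⟩⟩
    · ext y; exact H.apply_zero y
    · ext y; exact H.apply_one y
  · rintro ⟨γ⟩
    refine ⟨⟨⟨((ContinuousMap.mk _ continuous_subtype_val).comp γ.toContinuousMap).uncurry,
      fun y => congrArg (fun r : Ω^ N X x => r y) γ.source,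
      fun y => congrArg (fun r : Ω^ N X x => r y) γ.target⟩, fun t y hy => ?_⟩⟩
    exact ((γ t).2 y hy).trans (p.2 y hy).symm

theorem transAt_apply [DecidableEq N] (i : N) (f g : Ω^ N X x) (t : I^N) :
    transAt i f g t =
      if (t i : ℝ) ≤ 1 / 2
      then f (Function.update t i <| Set.projIcc 0 1 zero_le_one (2 * t i))
      else g (Function.update t i <| Set.projIcc 0 1 zero_le_one (2 * t i - 1)) := rfl

@[simp]
theorem congr_apply (e : M ≃ N) (p : Ω^ M X x) (t : I^N) : congr x e p t = p (t ∘ e) := rfl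

@[simp]
theorem genLoopGenLoopEquiv_apply_apply (p : Ω^ M (Ω^ N X x) const) (t : I^(M ⊕ N)) :
    genLoopGenLoopEquiv x p t = p (t ∘ Sum.inl) (t ∘ Sum.inr) := rfl

theorem congr_transAt [DecidableEq M] [DecidableEq N] (e : M ≃ N) (i : M) (f g : Ω^ M X x) :
    congr x e (transAt i f g) = transAt (e i) (congr x e f) (congr x e g) := by
  ext t
  simp only [congr_apply, transAt_apply, Function.comp_apply, Function.update_comp_equiv,
    Equiv.symm_apply_apply]

theorem genLoopGenLoopEquiv_transAt [DecidableEq M] [DecidableEq N] (i : M)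
    (f g : Ω^ M (Ω^ N X x) const) :
    genLoopGenLoopEquiv x (transAt i f g) =
      transAt (Sum.inl i) (genLoopGenLoopEquiv x f) (genLoopGenLoopEquiv x g) := by
  ext t
  rw [genLoopGenLoopEquiv_apply_apply, transAt_apply, transAt_apply,
    apply_ite (fun r : Ω^ N X x => r (t ∘ Sum.inr))]
  simp only [genLoopGenLoopEquiv_apply_apply, Function.comp_apply, Sum.update_inl_comp_inl,
    Sum.update_inl_comp_inr]

end GenLoop

namespace Homeomorph

variable {M N X Y : Type*} [TopologicalSpace X] [TopologicalSpace Y] {x : X} {y : Y}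

theorem genLoop_homotopic_iff (F : Ω^ M X x ≃ₜ Ω^ N Y y) {p q : Ω^ M X x} :
    GenLoop.Homotopic (F p) (F q) ↔ GenLoop.Homotopic p q := by
  simp only [GenLoop.homotopic_iff_joined]
  exact ⟨fun h => by simpa using h.map F.symm.continuous, fun h => h.map F.continuous⟩

def homotopyGroupCongr (F : Ω^ M X x ≃ₜ Ω^ N Y y) :
    HomotopyGroup M X x ≃ₜ HomotopyGroup N Y y :=
  Homeomorph.Quotient.congr F fun _ _ => F.genLoop_homotopic_iff.symm

theorem homotopyGroupCongr_mul [DecidableEq M] [DecidableEq N] [Nonempty M] [Nonempty N]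
    (F : Ω^ M X x ≃ₜ Ω^ N Y y) {i : M} {j : N}
    (hF : ∀ p q, F (GenLoop.transAt i p q) = GenLoop.transAt j (F p) (F q))
    (a b : HomotopyGroup M X x) :
    F.homotopyGroupCongr (a * b) = F.homotopyGroupCongr a * F.homotopyGroupCongr b := by
  induction a, b using Quotient.inductionOn₂ with
  | h p q =>
    have hM := HomotopyGroup.mul_spec (x := x) (i := i) (p := p) (q := q)
    have hN := HomotopyGroup.mul_spec (x := y) (i := j) (p := F p) (q := F q)
    exact (congrArg F.homotopyGroupCongr hM).trans
      ((congrArg (Quotient.mk _) (hF q p)).trans hN.symm)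

end Homeomorph

/-- For a pointed space `(X,x)` and `n ≥ 1`, `1 ≤ k ≤ n-1`, the quasitopological
homotopy group `πₙ^{qtop}(X,x)` is isomorphic, as a quasitopological group (i.e. via a
group isomorphism which is also a homeomorphism), to
`π_{n-k}^{qtop}(Ω^k(X,x), e_x)`, where `Ω^k(X,x) = GenLoop (Fin k) X x` is the `k`-th
loop space with the compact-open topology and `e_x` is the constant `k`-loop at `x`. -/
theorem stmt0 (X : Type) [TopologicalSpace X] (x : X) (n k : ℕ)
    (hk : 1 ≤ k) (hkn : k ≤ n - 1) :
    letI : Nonempty (Fin n) := ⟨⟨0, by omega⟩⟩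
    letI : Nonempty (Fin (n - k)) := ⟨⟨0, by omega⟩⟩
    ∃ e : HomotopyGroup (Fin n) X x ≃
        HomotopyGroup (Fin (n - k)) (GenLoop (Fin k) X x) GenLoop.const,
      (∀ a b, e (a * b) = e a * e b) ∧ IsHomeomorph e := by
  let split : Fin (n - k) ⊕ Fin k ≃ Fin n := finSumFinEquiv.trans (finCongr (by omega))
  let F := (GenLoop.genLoopGenLoopEquiv x).trans (GenLoop.congr x split)
  let j₀ : Fin (n - k) := ⟨0, by omega⟩
  have : Nonempty (Fin (n - k)) := ⟨j₀⟩
  have : Nonempty (Fin n) := ⟨split (Sum.inl j₀)⟩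
  have hF : ∀ p q, F (GenLoop.transAt j₀ p q) =
      GenLoop.transAt (split (Sum.inl j₀)) (F p) (F q) := fun p q => by
    simp only [F, Homeomorph.trans_apply, GenLoop.genLoopGenLoopEquiv_transAt,
      GenLoop.congr_transAt]
  let G : HomotopyGroup _ _ _ ≃* HomotopyGroup _ _ _ :=
    MulEquiv.mk' F.homotopyGroupCongr.toEquiv (F.homotopyGroupCongr_mul hF)
  exact ⟨G.symm.toEquiv, G.symm.map_mul, F.homotopyGroupCongr.symm.isHomeomorph⟩
end
end

section
/- Let X be a locally (n−1)-connected space. Then X is semilocally n-connected at x if and only if the loop space Ω^{n−1}(X,x) is semilocally simply connected at the constant loop e_x. -/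
open Topology.Homotopy unitInterval

noncomputable section

/-- `X` is semilocally `n`-connected at `x` if there is an open neighbourhood `U` of `x`
such that every `n`-loop at `x` lying in `U` is nullhomotopic (rel boundary) in `X`.
For `n = 1` this is precisely being semilocally simply connected at the point. -/
def SemilocallyNConnectedAt (n : ℕ) (X : Type) [TopologicalSpace X] (x : X) : Prop :=
  ∃ U : Set X, IsOpen U ∧ x ∈ U ∧
    ∀ γ : GenLoop (Fin n) X x, Set.range ⇑γ ⊆ U → GenLoop.Homotopic γ GenLoop.const

/-- `X` is locally `n`-connected if it has a basis of open sets whose inclusions induce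
trivial maps on `π_i` for all `i ≤ n`: every neighbourhood contains an open
neighbourhood `V` such that every `i`-loop (`i ≤ n`) in `V` is nullhomotopic in `X`. -/
def LocallyNConnected (n : ℕ) (X : Type) [TopologicalSpace X] : Prop :=
  ∀ (y : X) (U : Set X), IsOpen U → y ∈ U →
    ∃ V : Set X, IsOpen V ∧ y ∈ V ∧ V ⊆ U ∧
      ∀ i ≤ n, ∀ (z : X), z ∈ V → ∀ γ : GenLoop (Fin i) X z,
        Set.range ⇑γ ⊆ V → GenLoop.Homotopic γ GenLoop.const

namespace StmtAux

/-- Neighbourhoods of a constant map in the compact-open topology contain a set of the form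
`{g | range g ⊆ U}`. -/
lemma key_aux {K X : Type} [TopologicalSpace K] [TopologicalSpace X] (x : X)
    {V : Set C(K, X)}
    (hV : TopologicalSpace.GenerateOpen
      (Set.image2 (fun Kc U ↦ {f : C(K, X) | Set.MapsTo ⇑f Kc U}) {Kc : Set K | IsCompact Kc}
        {t : Set X | IsOpen t}) V)
    (hf : ContinuousMap.const K x ∈ V) :
    ∃ U : Set X, IsOpen U ∧ x ∈ U ∧ ∀ g : C(K, X), Set.range ⇑g ⊆ U → g ∈ V := by
  induction hV with
  | basic s hs =>
    obtain ⟨Kc, hKc, U, hU, rfl⟩ := hs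
    rcases Kc.eq_empty_or_nonempty with rfl | ⟨k, hk⟩
    · exact ⟨Set.univ, isOpen_univ, trivial, fun g _ => Set.mapsTo_empty _ _⟩
    · refine ⟨U, hU, hf hk, fun g hg a _ => hg ⟨a, rfl⟩⟩
  | univ => exact ⟨Set.univ, isOpen_univ, trivial, fun g _ => trivial⟩
  | inter s t _ _ ihs iht =>
    obtain ⟨U₁, hU₁, hxU₁, h₁⟩ := ihs hf.1
    obtain ⟨U₂, hU₂, hxU₂, h₂⟩ := iht hf.2
    exact ⟨U₁ ∩ U₂, hU₁.inter hU₂, ⟨hxU₁, hxU₂⟩,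
      fun g hg => ⟨h₁ g (hg.trans Set.inter_subset_left),
        h₂ g (hg.trans Set.inter_subset_right)⟩⟩
  | sUnion S _ ih =>
    obtain ⟨t, htS, hft⟩ := hf
    obtain ⟨U, hU, hxU, h⟩ := ih t htS hft
    exact ⟨U, hU, hxU, fun g hg => ⟨t, htS, h g hg⟩⟩

lemma key {K X : Type} [TopologicalSpace K] [TopologicalSpace X] (x : X)
    {V : Set C(K, X)} (hV : IsOpen V) (hf : ContinuousMap.const K x ∈ V) :
    ∃ U : Set X, IsOpen U ∧ x ∈ U ∧ ∀ g : C(K, X), Set.range ⇑g ⊆ U → g ∈ V :=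
  key_aux x hV hf

/-- Push a generalized loop forward along a continuous map. -/
def push {Y Z N : Type} [TopologicalSpace Y] [TopologicalSpace Z] (f : C(Y, Z)) {y : Y} {z : Z}
    (hy : f y = z) (γ : GenLoop N Y y) : GenLoop N Z z :=
  ⟨f.comp γ.1, fun t ht => (congrArg f (γ.2 t ht)).trans hy⟩

lemma push_apply {Y Z N : Type} [TopologicalSpace Y] [TopologicalSpace Z] (f : C(Y, Z)) {y : Y}
    {z : Z} (hy : f y = z) (γ : GenLoop N Y y) (t) : push f hy γ t = f (γ t) := rfl

lemma push_homotopic {Y Z N : Type} [TopologicalSpace Y] [TopologicalSpace Z] (f : C(Y, Z))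
    {y : Y} {z : Z} (hy : f y = z) {a b : GenLoop N Y y} (h : GenLoop.Homotopic a b) :
    GenLoop.Homotopic (push f hy a) (push f hy b) := by
  refine h.map fun H => ?_
  exact ⟨⟨⟨fun p => f (H p), by fun_prop⟩,
      fun t => congrArg f (H.apply_zero t), fun t => congrArg f (H.apply_one t)⟩,
    fun t s hs => congrArg f (H.eq_fst t hs)⟩

lemma push_const {Y Z N : Type} [TopologicalSpace Y] [TopologicalSpace Z] (f : C(Y, Z)) {y : Y}
    {z : Z} (hy : f y = z) : push f hy (GenLoop.const : GenLoop N Y y) = GenLoop.const := by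
  ext t; exact hy

/-- Semilocal `n`-connectedness transfers along pointed homeomorphisms. -/
lemma semiloc_of_homeo {Y Z : Type} [TopologicalSpace Y] [TopologicalSpace Z] (m : ℕ)
    (h : Y ≃ₜ Z) {y : Y} {z : Z} (hy : h y = z) (H : SemilocallyNConnectedAt m Y y) :
    SemilocallyNConnectedAt m Z z := by
  obtain ⟨U, hU, hyU, hP⟩ := H
  have hzy : h.symm z = y := by rw [← hy]; exact h.symm_apply_apply y
  refine ⟨h.symm ⁻¹' U, h.symm.continuous.isOpen_preimage U hU, ?_, fun γ hγ => ?_⟩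
  · show h.symm z ∈ U
    rw [hzy]; exact hyU
  · have hγ' : GenLoop.Homotopic (push (⟨h.symm, h.symm.continuous⟩ : C(Z, Y)) hzy γ)
        GenLoop.const := by
      refine hP _ ?_
      rintro a ⟨t, rfl⟩
      exact hγ ⟨t, rfl⟩
    have h2 := push_homotopic (⟨h, h.continuous⟩ : C(Y, Z)) hy hγ'
    rw [push_const] at h2
    have : push (⟨h, h.continuous⟩ : C(Y, Z)) hy
        (push (⟨h.symm, h.symm.continuous⟩ : C(Z, Y)) hzy γ) = γ := by
      ext t; exact h.apply_symm_apply (γ t)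
    rwa [this] at h2

lemma semiloc_iff_of_homeo {Y Z : Type} [TopologicalSpace Y] [TopologicalSpace Z] (m : ℕ)
    (h : Y ≃ₜ Z) {y : Y} {z : Z} (hy : h y = z) :
    SemilocallyNConnectedAt m Y y ↔ SemilocallyNConnectedAt m Z z :=
  ⟨semiloc_of_homeo m h hy, semiloc_of_homeo m h.symm (by rw [← hy]; exact h.symm_apply_apply y)⟩


/-- Reindexing a generalized loop along an equivalence of index types. -/
def reindexHomeo {M N : Type} (e : M ≃ N) {X : Type} [TopologicalSpace X] (x : X) :
    GenLoop N X x ≃ₜ GenLoop M X x where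
  toFun f := ⟨f.1.comp ⟨fun y j => y (e.symm j), by fun_prop⟩, by
    rintro t ⟨i, hi⟩
    exact f.2 _ ⟨e i, by simpa using hi⟩⟩
  invFun f := ⟨f.1.comp ⟨fun y j => y (e j), by fun_prop⟩, by
    rintro t ⟨i, hi⟩
    exact f.2 _ ⟨e.symm i, by simpa using hi⟩⟩
  left_inv f := by
    apply GenLoop.ext
    intro t
    show f.1 _ = f.1 t
    congr 1
    ext j
    simp
  right_inv f := by
    apply GenLoop.ext
    intro t
    show f.1 _ = f.1 t
    congr 1
    ext j
    simp
  continuous_toFun := by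
    apply Continuous.subtype_mk
    exact (ContinuousMap.continuous_precomp _).comp continuous_subtype_val
  continuous_invFun := by
    apply Continuous.subtype_mk
    exact (ContinuousMap.continuous_precomp _).comp continuous_subtype_val

lemma reindexHomeo_const {M N : Type} (e : M ≃ N) {X : Type} [TopologicalSpace X] (x : X) :
    reindexHomeo e x (GenLoop.const) = GenLoop.const := rfl

/-- The equivalence between `Fin m` and the non-`last` elements of `Fin (m+1)`. -/
def eFin (m : ℕ) : Fin m ≃ {j : Fin (m + 1) // j ≠ Fin.last m} where
  toFun j := ⟨j.castSucc, (Fin.castSucc_lt_last j).ne⟩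
  invFun j := ⟨j.1.1, by
    rcases Nat.lt_succ_iff_lt_or_eq.1 j.1.2 with h | h
    · exact h
    · exact absurd (Fin.ext h) j.2⟩
  left_inv j := rfl
  right_inv j := Subtype.ext (Fin.ext rfl)

/-- A pointwise nullhomotopy statement for ordinary paths. -/
def PathNull (Y : Type) [TopologicalSpace Y] (y : Y) : Prop :=
  ∃ W : Set Y, IsOpen W ∧ y ∈ W ∧
    ∀ p : Path y y, Set.range ⇑p ⊆ W → p.Homotopic (Path.refl y)

lemma genLoop_homotopic_iff {Y : Type} [TopologicalSpace Y] {y : Y}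
    (a₁ a₂ : GenLoop (Fin 1) Y y) :
    GenLoop.Homotopic a₁ a₂ ↔
      (genLoopEquivOfUnique (Fin 1) a₁).Homotopic (genLoopEquivOfUnique (Fin 1) a₂) := by
  constructor <;> rintro ⟨H⟩
  · exact
      ⟨{  toFun := fun tx => H (tx.fst, fun _ => tx.snd)
          map_zero_left := fun _ => H.apply_zero _
          map_one_left := fun _ => H.apply_one _
          prop' := fun t y iH => H.prop' _ _ ⟨default, iH⟩ }⟩
  refine
    ⟨⟨⟨⟨fun tx => H (tx.fst, tx.snd default), H.continuous.comp ?_⟩, fun y => ?_, fun y => ?_⟩, ?_⟩⟩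
  · exact continuous_fst.prodMk ((continuous_apply _).comp continuous_snd)
  · exact (H.apply_zero _).trans (congr_arg a₁ (eq_const_of_unique y).symm)
  · exact (H.apply_one _).trans (congr_arg a₂ (eq_const_of_unique y).symm)
  · rintro t y ⟨i, iH⟩
    cases Unique.eq_default i
    exact (H.eq_fst _ iH).trans (congr_arg a₁ (eq_const_of_unique y).symm)

lemma range_genLoopEquivOfUnique {Y : Type} [TopologicalSpace Y] {y : Y}
    (a : GenLoop (Fin 1) Y y) :
    Set.range ⇑(genLoopEquivOfUnique (Fin 1) a) = Set.range ⇑a := by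
  apply subset_antisymm
  · rintro _ ⟨t, rfl⟩
    exact ⟨_, rfl⟩
  · rintro _ ⟨c, rfl⟩
    exact ⟨c default, congrArg a (funext fun i => (congrArg c (Unique.eq_default i)).symm)⟩

lemma genLoopEquivOfUnique_const {Y : Type} [TopologicalSpace Y] {y : Y} :
    genLoopEquivOfUnique (Fin 1) (GenLoop.const : GenLoop (Fin 1) Y y) = Path.refl y := by
  ext t
  rfl

lemma semiloc_one_iff_pathNull {Y : Type} [TopologicalSpace Y] (y : Y) :
    SemilocallyNConnectedAt 1 Y y ↔ PathNull Y y := by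
  constructor <;> rintro ⟨U, hU, hyU, hP⟩ <;> refine ⟨U, hU, hyU, ?_⟩
  · intro p hp
    have h1 : GenLoop.Homotopic ((genLoopEquivOfUnique (Fin 1)).symm p) GenLoop.const := by
      apply hP
      have := range_genLoopEquivOfUnique ((genLoopEquivOfUnique (Fin 1)).symm p)
      rw [(genLoopEquivOfUnique (Fin 1)).apply_symm_apply] at this
      rw [← this]
      exact hp
    have h2 := (genLoop_homotopic_iff _ _).1 h1
    rwa [(genLoopEquivOfUnique (Fin 1)).apply_symm_apply, genLoopEquivOfUnique_const] at h2
  · intro γ hγ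
    rw [genLoop_homotopic_iff, genLoopEquivOfUnique_const]
    apply hP
    rw [range_genLoopEquivOfUnique]
    exact hγ

lemma toLoop_genConst {N X : Type} [DecidableEq N] [TopologicalSpace X] {x : X} (i : N) :
    GenLoop.toLoop i (GenLoop.const : GenLoop N X x) = Path.refl GenLoop.const := by
  ext t y
  rfl

lemma semiloc_succ_iff_pathNull {X : Type} [TopologicalSpace X] (x : X) (m : ℕ) :
    SemilocallyNConnectedAt (m + 1) X x ↔
      PathNull (GenLoop {j : Fin (m + 1) // j ≠ Fin.last m} X x) GenLoop.const := by
  set i0 : Fin (m + 1) := Fin.last m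
  constructor
  · rintro ⟨U, hU, hxU, hP⟩
    refine ⟨{β | Set.range ⇑β ⊆ U}, ?_, ?_, ?_⟩
    · refine isOpen_induced_iff.2 ⟨{g | Set.MapsTo ⇑g Set.univ U},
        ContinuousMap.isOpen_setOf_mapsTo isCompact_univ hU, ?_⟩
      ext β
      constructor
      · intro hβ
        rintro _ ⟨t, rfl⟩
        exact hβ (Set.mem_univ t)
      · intro hβ t _
        exact hβ ⟨t, rfl⟩
    · rintro _ ⟨t, rfl⟩
      exact hxU
    · intro p hp
      have hγ : Set.range ⇑(GenLoop.fromLoop i0 p) ⊆ U := by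
        rintro _ ⟨t, rfl⟩
        rw [GenLoop.fromLoop_apply]
        exact hp ⟨t i0, rfl⟩ ⟨_, rfl⟩
      have h1 := GenLoop.homotopicTo i0 (hP _ hγ)
      rwa [GenLoop.to_from, toLoop_genConst] at h1
  · rintro ⟨W, hW, hconstW, hP⟩
    obtain ⟨V, hV, rfl⟩ := isOpen_induced_iff.1 hW
    obtain ⟨U, hU, hxU, hkey⟩ := key x hV hconstW
    refine ⟨U, hU, hxU, fun γ hγ => ?_⟩
    have hp : Set.range ⇑(GenLoop.toLoop i0 γ) ⊆ Subtype.val ⁻¹' V := by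
      rintro _ ⟨t, rfl⟩
      refine hkey _ ?_
      rintro _ ⟨s, rfl⟩
      exact hγ ⟨_, rfl⟩
    have h1 := hP _ hp
    rw [← toLoop_genConst i0] at h1
    exact GenLoop.homotopicFrom i0 h1

end StmtAux

/-- Let `X` be locally `(n-1)`-connected.  Then `X` is semilocally `n`-connected at `x`
if and only if the loop space `Ω^{n-1}(X,x)` (with the compact-open topology) is
semilocally simply connected at the constant loop `e_x`. -/
theorem stmt3 (n : ℕ) (hn : 1 ≤ n) (X : Type) [TopologicalSpace X] (x : X)
    (hX : LocallyNConnected (n - 1) X) :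
    SemilocallyNConnectedAt n X x ↔
      SemilocallyNConnectedAt 1 (GenLoop (Fin (n - 1)) X x) GenLoop.const := by
  obtain ⟨m, rfl⟩ : ∃ m, n = m + 1 := ⟨n - 1, (Nat.succ_pred_eq_of_pos hn).symm⟩
  exact (StmtAux.semiloc_succ_iff_pathNull x m).trans
    ((StmtAux.semiloc_one_iff_pathNull _).symm.trans
      (StmtAux.semiloc_iff_of_homeo 1 (StmtAux.reindexHomeo (StmtAux.eFin m) x)
        (StmtAux.reindexHomeo_const _ _)))
end
end

section
/- If X is a topological space such that Ω^{n−1}(X,x) is a small generated space, then π_n^{qtop}(X,x) is an indiscrete topological group. -/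
/-!
An open set of loops that is saturated for homotopy is stable under concatenation with a
conjugate `α * β * α⁻¹` of a small loop `β`: by continuity of concatenation it contains the
concatenation with `α * γ * α⁻¹` for every `γ` near the constant loop, and `β` is homotopic
to such a `γ`. If these conjugates generate `π₁`, such a set is empty or everything, i.e.
`π₁^{qtop}` is indiscrete. Finally `Ωⁿ⁺¹(X,x) ≃ₜ Ω(Ωⁿ(X,x))` identifies `πₙ₊₁^{qtop}(X,x)`
with `π₁^{qtop}(Ωⁿ(X,x))`, and an indiscrete group is trivially a topological group.
-/

open Topology.Homotopy unitInterval

noncomputable section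

/-- A loop `β` at `y` is small if it is homotopic (rel endpoints) to a loop lying in
every neighbourhood of `y`. -/
def IsSmallLoop {Y : Type} [TopologicalSpace Y] {y : Y} (β : Path y y) : Prop :=
  ∀ U ∈ nhds y, ∃ β' : Path y y, Set.range ⇑β' ⊆ U ∧ Path.Homotopic β β'

/-- The small generated subgroup `π₁^{sg}(Y,y)` of the fundamental group: the subgroup
generated by the classes `[α * β * α⁻¹]` where `α` is a path starting at `y` and `β` is
a small loop at `α(1)`. -/
def sgSubgroup (Y : Type) [TopologicalSpace Y] (y : Y) :
    Subgroup (FundamentalGroup (TopCat.of Y) y) :=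
  Subgroup.closure {g | ∃ (z : Y) (α : Path y z) (β : Path z z),
    IsSmallLoop β ∧ g = FundamentalGroup.fromPath ⟦(α.trans β).trans α.symm⟧}

/-- `Y` is small generated if its fundamental group equals its small generated
subgroup at every point. -/
def SmallGeneratedSpace (Y : Type) [TopologicalSpace Y] : Prop :=
  ∀ y : Y, sgSubgroup Y y = ⊤

open Set Filter Topology

lemma ContinuousMap.exists_mem_nhds_forall_range_subset_mem {Z Y : Type*} [TopologicalSpace Z]
    [TopologicalSpace Y] {z : Y} {A : Set C(Z, Y)} (hA : A ∈ 𝓝 (ContinuousMap.const Z z)) :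
    ∃ V ∈ 𝓝 z, ∀ g : C(Z, Y), range g ⊆ V → g ∈ A := by
  obtain ⟨⟨K, V⟩, ⟨-, hV⟩, hKV⟩ := (𝓝 z).basis_sets.nhds_continuousMapConst.mem_iff.1 hA
  exact ⟨V, hV, fun g hg => hKV fun a _ => hg ⟨a, rfl⟩⟩

lemma Path.exists_mem_nhds_forall_range_subset_mem {Y : Type*} [TopologicalSpace Y] {z : Y}
    {A : Set (Path z z)} (hA : A ∈ 𝓝 (Path.refl z)) :
    ∃ V ∈ 𝓝 z, ∀ γ : Path z z, range γ ⊆ V → γ ∈ A := by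
  rw [nhds_induced] at hA
  obtain ⟨B, hB, hBA⟩ := hA
  obtain ⟨V, hV, hVB⟩ := ContinuousMap.exists_mem_nhds_forall_range_subset_mem hB
  exact ⟨V, hV, fun γ hγ => hBA (hVB γ.toContinuousMap hγ)⟩

section SmallLoop

variable {Y : Type} [TopologicalSpace Y] {z : Y} {β : Path z z}

lemma IsSmallLoop.exists_homotopic_mem {A : Set (Path z z)} (hβ : IsSmallLoop β)
    (hA : A ∈ 𝓝 (Path.refl z)) : ∃ β' ∈ A, β.Homotopic β' := by
  obtain ⟨V, hV, hVA⟩ := Path.exists_mem_nhds_forall_range_subset_mem hA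
  obtain ⟨β', hβ'V, hββ'⟩ := hβ V hV
  exact ⟨β', hVA β' hβ'V, hββ'⟩

lemma IsSmallLoop.symm (hβ : IsSmallLoop β) : IsSmallLoop β.symm := by
  intro U hU
  obtain ⟨β', hβ'U, hββ'⟩ := hβ U hU
  exact ⟨β'.symm, by rwa [Path.symm_range], hββ'.symm₂⟩

lemma IsSmallLoop.map {Y' : Type} [TopologicalSpace Y'] {f : Y → Y'} (hβ : IsSmallLoop β)
    (hf : Continuous f) : IsSmallLoop (β.map hf) := by
  intro U hU
  obtain ⟨β', hβ'U, hββ'⟩ := hβ _ (hf.continuousAt.preimage_mem_nhds hU)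
  refine ⟨β'.map hf, ?_, hββ'.map ⟨f, hf⟩⟩
  rw [Path.map_coe, range_comp]
  exact image_subset_iff.2 hβ'U

end SmallLoop

section SmallGenerated

variable {Y : Type} [TopologicalSpace Y] {y : Y}

open FundamentalGroup

lemma conj_mul_mem_of_isOpen_preimage {S : Set (FundamentalGroup (TopCat.of Y) y)}
    (hS : IsOpen ((fun p : Path y y => fromPath ⟦p⟧) ⁻¹' S)) {c} (hc : c ∈ S) {z : Y}
    (α : Path y z) {β : Path z z} (hβ : IsSmallLoop β) :
    fromPath ⟦(α.trans β).trans α.symm⟧ * c ∈ S := by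
  obtain ⟨p, rfl⟩ := Quotient.exists_rep c
  let A : Set (Path z z) := {γ | fromPath ⟦(α.trans γ).trans α.symm⟧ * fromPath ⟦p⟧ ∈ S}
  have hA : IsOpen A := hS.preimage (show Continuous fun γ : Path z z =>
    p.trans ((α.trans γ).trans α.symm) by fun_prop)
  have hreflA : Path.refl z ∈ A := by
    have h1 : fromPath (X := TopCat.of Y) ⟦(α.trans (Path.refl z)).trans α.symm⟧ = 1 :=
      Quotient.sound (((Path.Homotopic.trans_refl α).hcomp (.refl _)).trans
        (Path.Homotopic.trans_symm α))
    simpa only [A, mem_ofPred_eq, h1, one_mul] using hc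
  obtain ⟨β', hβ'A, hββ'⟩ := hβ.exists_homotopic_mem (hA.mem_nhds hreflA)
  have hconj : (⟦(α.trans β).trans α.symm⟧ : Path.Homotopic.Quotient y y) =
      ⟦(α.trans β').trans α.symm⟧ :=
    Quotient.sound (((Path.Homotopic.refl α).hcomp hββ').hcomp (Path.Homotopic.refl _))
  rwa [hconj]

lemma fromPath_conj_inv {z : Y} (α : Path y z) (β : Path z z) :
    (fromPath (X := TopCat.of Y) ⟦(α.trans β).trans α.symm⟧)⁻¹ =
      fromPath ⟦(α.trans β.symm).trans α.symm⟧ := by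
  change (⟦((α.trans β).trans α.symm).symm⟧ : Path.Homotopic.Quotient y y) = _
  rw [Path.trans_symm, Path.trans_symm, Path.symm_symm]
  exact Quotient.sound (Path.Homotopic.trans_assoc _ _ _).symm

lemma sgSubgroup_mul_mem_of_isOpen_preimage {S : Set (FundamentalGroup (TopCat.of Y) y)}
    (hS : IsOpen ((fun p : Path y y => fromPath ⟦p⟧) ⁻¹' S)) {g} (hg : g ∈ sgSubgroup Y y) {c}
    (hc : c ∈ S) : g * c ∈ S := by
  induction hg using Subgroup.closure_induction'' generalizing c with
  | mem _ hg =>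
    obtain ⟨z, α, β, hβ, rfl⟩ := hg
    exact conj_mul_mem_of_isOpen_preimage hS hc α hβ
  | inv_mem _ hg =>
    obtain ⟨z, α, β, hβ, rfl⟩ := hg
    rw [fromPath_conj_inv]
    exact conj_mul_mem_of_isOpen_preimage hS hc α hβ.symm
  | one => rwa [one_mul]
  | mul _ _ _ _ hg hg' => rw [mul_assoc]; exact hg (hg' hc)

theorem coinduced_fromPath_eq_top (hsg : sgSubgroup Y y = ⊤) :
    TopologicalSpace.coinduced (fun p : Path y y => fromPath (X := TopCat.of Y) ⟦p⟧)
      inferInstance = ⊤ := by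
  refine le_antisymm le_top fun S hS => ?_
  rw [TopologicalSpace.isOpen_top_iff]
  refine S.eq_empty_or_nonempty.imp_right fun ⟨c, hc⟩ => eq_univ_of_forall fun g => ?_
  have := sgSubgroup_mul_mem_of_isOpen_preimage hS (hsg ▸ Subgroup.mem_top (g * c⁻¹)) hc
  rwa [inv_mul_cancel_right] at this

end SmallGenerated

section Invariance

variable {Y Y' : Type} [TopologicalSpace Y] [TopologicalSpace Y']

lemma map_sgSubgroup_le (f : C(Y, Y')) (y : Y) :
    (sgSubgroup Y y).map (FundamentalGroup.map f y) ≤ sgSubgroup Y' (f y) := by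
  rw [sgSubgroup, MonoidHom.map_closure]
  refine Subgroup.closure_mono ?_
  rintro _ ⟨_, ⟨z, α, β, hβ, rfl⟩, rfl⟩
  refine ⟨f z, α.map f.continuous, β.map f.continuous, hβ.map f.continuous, ?_⟩
  change (⟦((α.trans β).trans α.symm).map f.continuous⟧ : Path.Homotopic.Quotient _ _) = _
  rw [Path.map_trans, Path.map_trans, Path.map_symm]

lemma Homeomorph.surjective_fundamentalGroupMap (e : Y ≃ₜ Y') (y : Y) :
    Function.Surjective (FundamentalGroup.map (e : C(Y, Y')) y) := by
  intro γ
  obtain ⟨p, rfl⟩ := Quotient.exists_rep γ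
  have hy := (e.symm_apply_apply y).symm
  refine ⟨⟦(p.map e.symm.continuous).cast hy hy⟧, ?_⟩
  change (⟦_⟧ : Path.Homotopic.Quotient _ _) = ⟦p⟧
  congr 1
  ext t
  simp

theorem SmallGeneratedSpace.of_homeomorph (e : Y ≃ₜ Y') (h : SmallGeneratedSpace Y) :
    SmallGeneratedSpace Y' := by
  intro y'
  obtain ⟨y, rfl⟩ := e.surjective y'
  rw [eq_top_iff, ← Subgroup.map_top_of_surjective _ (e.surjective_fundamentalGroupMap y), ← h y]
  exact map_sgSubgroup_le (e : C(Y, Y')) y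

end Invariance

open GenLoop in
theorem piQTop_eq_top_of_sgSubgroup_eq_top {N X : Type} [DecidableEq N] [TopologicalSpace X]
    {x : X} (i : N) (h : sgSubgroup (Ω^ {j // j ≠ i} X x) const = ⊤) : piQTop N X x = ⊤ := by
  let E := homotopyGroupEquivFundamentalGroup (X := X) (x := x) i
  have hE (p) : E.symm (FundamentalGroup.fromPath ⟦p⟧) = ⟦fromLoop i p⟧ := by
    refine E.symm_apply_eq.2 ?_
    change _ = FundamentalGroup.fromPath ⟦toLoop i (fromLoop i p)⟧
    rw [to_from]
  calc piQTop N X x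
      = .coinduced (fun p => (⟦fromLoop i p⟧ : HomotopyGroup N X x)) inferInstance :=
        (congrArg (TopologicalSpace.coinduced (Quotient.mk _))
          (loopHomeo i).symm.coinduced_eq).symm.trans coinduced_compose
    _ = .coinduced E.symm (.coinduced (fun p => FundamentalGroup.fromPath ⟦p⟧) inferInstance) := by
        rw [coinduced_compose]; simp only [Function.comp_def, hE]
    _ = ⊤ := by
        rw [coinduced_fromPath_eq_top h, E.coinduced_symm, induced_top]

/-- If `Ω^{n-1}(X,x)` is a small generated space then `πₙ^{qtop}(X,x)` is an indiscrete
topological group: its quotient topology is the indiscrete one and it is a topological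
group (jointly continuous multiplication, continuous inversion).  (Here the paper's `n ≥ 1`
is written as `n + 1`.) -/
theorem stmt4 (n : ℕ) (X : Type) [TopologicalSpace X] (x : X)
    (h : SmallGeneratedSpace (GenLoop (Fin n) X x)) :
    piQTop (Fin (n + 1)) X x = ⊤ ∧
      (Continuous fun p : HomotopyGroup (Fin (n + 1)) X x × HomotopyGroup (Fin (n + 1)) X x =>
        p.1 * p.2) ∧
      Continuous fun a : HomotopyGroup (Fin (n + 1)) X x => a⁻¹ := by
  have hsg := h.of_homeomorph (GenLoop.congr x (finSuccAboveEquiv 0))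
  have htop := piQTop_eq_top_of_sgSubgroup_eq_top 0 (hsg GenLoop.const)
  refine ⟨htop, ?_, ?_⟩ <;> rw [htop] <;> exact continuous_top
end
end

section
/- For pointed spaces B ⊆ A ⊆ X there is a long exact sequence of the triple in the category of quasitopological groups: ⋯ → π_{n+1}^{qtop}(X,A) → π_n^{qtop}(A,B) → π_n^{qtop}(X,B) → π_n^{qtop}(X,A) → π_{n−1}^{qtop}(A,B) → ⋯, with all maps continuous homomorphisms. -/
open Topology.Homotopy unitInterval

noncomputable section

/-- The space of relative `n+1`-loops for the pair `(X, A)` based at `x ∈ A`: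
continuous maps `(I^{n+1}, ∂I^{n+1}, J^n) → (X, A, x)`, i.e. maps sending the face
`t_{last} = 0` into `A` and the rest of the boundary to `x`.  It carries the
compact-open topology. -/
def RelGenLoop (n : ℕ) (X : Type) [TopologicalSpace X] (A : Set X) (x : X) :
    Set C((Fin (n + 1) → I), X) :=
  {f | (∀ t, t (Fin.last n) = 0 → f t ∈ A) ∧
    (∀ t, t (Fin.last n) = 1 → f t = x) ∧
    ∀ t, (∃ i : Fin n, t i.castSucc = 0 ∨ t i.castSucc = 1) → f t = x}

/-- Homotopy of relative loops through relative loops. -/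
def RelHomotopic {n : ℕ} {X : Type} [TopologicalSpace X] {A : Set X} {x : X}
    (f g : RelGenLoop n X A x) : Prop :=
  ∃ Hmt : C(((Fin (n + 1) → I) × I), X),
    (∀ t, Hmt (t, 0) = f.1 t) ∧ (∀ t, Hmt (t, 1) = g.1 t) ∧
    (∀ t s, t (Fin.last n) = 0 → Hmt (t, s) ∈ A) ∧
    (∀ t s, t (Fin.last n) = 1 → Hmt (t, s) = x) ∧
    ∀ t s, (∃ i : Fin n, t i.castSucc = 0 ∨ t i.castSucc = 1) → Hmt (t, s) = x

/-- The relative homotopy group (as a set) `π_{n+1}(X, A, x)`: relative loops modulo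
relative homotopy.  With the quotient topology it is `π_{n+1}^{qtop}(X, A)`. -/
def RelHomotopyGroup (n : ℕ) (X : Type) [TopologicalSpace X] (A : Set X) (x : X) :=
  Quot (@RelHomotopic n X _ A x)

instance relQTop (n : ℕ) (X : Type) [TopologicalSpace X] (A : Set X) (x : X) :
    TopologicalSpace (RelHomotopyGroup n X A x) :=
  inferInstanceAs (TopologicalSpace (Quot _))

/-!
A relative homotopy class is a path component of the space of relative loops
(`relHomotopic_iff_joined`), so continuous maps of loop spaces induce continuous maps of the
quotients, and exactness reduces to constructing homotopies of relative loops.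

Composites of consecutive maps are trivial: a relative loop lying entirely in the subspace
contracts by pushing its last coordinate to `1`, and a relative loop of `(X, A)` is itself a
contraction of its face. For the converse, a contraction `K`, read as a map on `Iⁿ × I²`, is
precomposed with `bend`, a deformation of the square which ends by running the bottom edge down
the left edge and then along the bottom edge. If `K` contracts `f ∈ π(A, B)` in `(X, B)`, then
`K ∘ bend 1` is a relative loop of `(X, A)` whose face is homotopic to `f`. If `K` contracts
`f ∈ π(X, B)` in `(X, A)`, then bending `K` run backwards gives a homotopy in `(X, B)` from a
loop lying in `A` to `f`. If the face of `V ∈ π(X, A)` contracts in `(A, B)`, gluing the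
contraction below `V` and bending deforms `V` into a relative loop of `(X, B)`.
-/

local notation "proj" => Set.projIcc (0 : ℝ) 1 zero_le_one

open Set.Icc (convexComb)

/-- A deformation of the square `(a, s) ∈ I × I`, starting at the identity and fixing the top
edge: at `r = 1` the bottom edge runs from the corner `(0, 1)` down the left edge and then along
the bottom edge. -/
def bendSq (r a b : I) : I × I :=
  let c : ℝ := (1 - r) * a + r * (2 * a - 1)
  (convexComb (proj c) a b, convexComb (proj (-c)) 1 b)

@[fun_prop]
theorem continuous_bendSq : Continuous fun p : I × I × I => bendSq p.1 p.2.1 p.2.2 := by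
  unfold bendSq
  fun_prop

theorem bendSq_zero (a b : I) : bendSq 0 a b = (a, b) := by
  simp [bendSq, Set.projIcc_of_le_left _ (neg_nonpos.2 a.2.1)]

theorem bendSq_top (r a : I) : bendSq r a 1 = (a, 1) := by
  simp [bendSq]

theorem bendSq_left (r b : I) : bendSq r 0 b = (0, convexComb r 1 b) := by
  simp [bendSq, Set.projIcc_of_le_left _ (neg_nonpos.2 r.2.1)]

theorem bendSq_right (r b : I) : bendSq r 1 b = (1, b) := by
  have hc : (1 - r : ℝ) * 1 + r * (2 * 1 - 1) = 1 := by ring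
  simp only [bendSq, Set.Icc.coe_one, hc]
  simp [Set.projIcc_of_le_left _ (by norm_num : (-1 : ℝ) ≤ 0)]

theorem bendSq_bottom (r a : I) : (bendSq r a 0).1 = 0 ∨ (bendSq r a 0).2 = 0 := by
  simp only [bendSq, Set.Icc.convexComb_zero, projIcc_eq_zero, neg_nonpos]
  exact le_total _ _

section Bend

variable {n : ℕ}

theorem Fin.snoc_init_of_last_eq {α : Type*} {t : Fin (n + 1) → α} {a : α}
    (h : t (Fin.last n) = a) : Fin.snoc (Fin.init t) a = t :=
  h ▸ Fin.snoc_init_self t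

theorem Cube.mem_boundary_fin_succ {t : Fin (n + 1) → I} :
    t ∈ Cube.boundary (Fin (n + 1)) ↔
      Fin.init t ∈ Cube.boundary (Fin n) ∨ t (Fin.last n) = 0 ∨ t (Fin.last n) = 1 := by
  simp only [Cube.boundary, Set.mem_ofPred_eq, Fin.exists_fin_succ', Fin.init]

def bend : C(I × ((Fin (n + 1) → I) × I), (Fin (n + 1) → I) × I) where
  toFun q := (Fin.snoc (Fin.init q.2.1) (bendSq q.1 (q.2.1 (Fin.last n)) q.2.2).1,
    (bendSq q.1 (q.2.1 (Fin.last n)) q.2.2).2)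
  continuous_toFun := by fun_prop

theorem init_bend_fst (r : I) (p : (Fin (n + 1) → I) × I) :
    Fin.init (bend (r, p)).1 = Fin.init p.1 :=
  Fin.init_snoc _ _

theorem bend_fst_castSucc (r : I) (p : (Fin (n + 1) → I) × I) (i : Fin n) :
    (bend (r, p)).1 i.castSucc = p.1 i.castSucc := by
  simp only [bend, ContinuousMap.coe_mk, Fin.snoc_castSucc, Fin.init]

theorem bend_zero (p : (Fin (n + 1) → I) × I) : bend (0, p) = p := by
  simp [bend, bendSq_zero]

theorem bend_top (r : I) (t : Fin (n + 1) → I) : bend (r, t, 1) = (t, 1) := by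
  simp [bend, bendSq_top]

theorem bend_of_last_eq_zero (r b : I) {t : Fin (n + 1) → I} (ht : t (Fin.last n) = 0) :
    bend (r, t, b) = (t, convexComb r 1 b) := by
  simp only [bend, ContinuousMap.coe_mk, ht, bendSq_left, Fin.snoc_init_of_last_eq ht]

theorem bend_of_last_eq_one (r b : I) {t : Fin (n + 1) → I} (ht : t (Fin.last n) = 1) :
    bend (r, t, b) = (t, b) := by
  simp only [bend, ContinuousMap.coe_mk, ht, bendSq_right, Fin.snoc_init_of_last_eq ht]

theorem bend_bottom (r : I) (t : Fin (n + 1) → I) :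
    (bend (r, t, 0)).1 (Fin.last n) = 0 ∨ ∃ t', bend (r, t, 0) = (t', 0) := by
  rcases bendSq_bottom r (t (Fin.last n)) with h | h
  · exact .inl (by simpa [bend] using h)
  · exact .inr ⟨_, Prod.ext rfl h⟩

end Bend

theorem joined_of_homotopy {Y Z : Type*} [TopologicalSpace Y] [TopologicalSpace Z]
    {S : Set C(Y, Z)} {f g : S} (H : C(I × Y, Z)) (hH : ∀ s, H.curry s ∈ S)
    (h0 : ∀ y, H (0, y) = f.1 y) (h1 : ∀ y, H (1, y) = g.1 y) : Joined f g := by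
  refine ⟨⟨⟨fun s => ⟨H.curry s, hH s⟩, H.curry.continuous.subtype_mk _⟩, ?_, ?_⟩⟩ <;>
    ext y <;> simp [h0, h1]

theorem relHomotopic_iff_joined {n : ℕ} {X : Type} [TopologicalSpace X] {A : Set X} {x : X}
    {f g : RelGenLoop n X A x} : RelHomotopic f g ↔ Joined f g := by
  constructor
  · rintro ⟨H, h0, h1, hA, hx, hJ⟩
    exact joined_of_homotopy (H.comp .prodSwap)
      (fun s => ⟨fun t => hA t s, fun t => hx t s, fun t => hJ t s⟩) h0 h1
  · rintro ⟨γ⟩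
    exact ⟨⟨fun p => (γ p.2).1 p.1, by fun_prop⟩, by simp, by simp,
      fun t s => (γ s).2.1 t, fun t s => (γ s).2.2.1 t, fun t s => (γ s).2.2.2 t⟩

namespace RelGenLoop

variable {n : ℕ} {X : Type} [TopologicalSpace X] {A B : Set X} {x : X}

def const (n : ℕ) (hx : x ∈ A) : RelGenLoop n X A x :=
  ⟨.const _ x, fun _ _ => hx, fun _ _ => rfl, fun _ _ => rfl⟩

@[simp]
theorem const_apply (hx : x ∈ A) (t : Fin (n + 1) → I) : (const n hx).1 t = x :=
  rfl

theorem joined_const_of_forall_mem (hx : x ∈ A) (f : RelGenLoop n X A x)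
    (hf : ∀ t, f.1 t ∈ A) : Joined f (const n hx) := by
  refine joined_of_homotopy
    ⟨fun p => f.1 (Fin.snoc (Fin.init p.2) (convexComb (p.2 (Fin.last n)) 1 p.1)), by fun_prop⟩
    (fun s => ⟨fun t _ => hf _, fun t ht => ?_, fun t ⟨i, hi⟩ => ?_⟩) (fun t => by simp) fun t => ?_
  · simpa [ht] using f.2.2.1 _ (Fin.snoc_last _ _)
  · exact f.2.2.2 _ ⟨i, by rwa [Fin.snoc_castSucc]⟩
  · simpa only [ContinuousMap.coe_mk, Set.Icc.convexComb_one, const_apply] using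
      f.2.2.1 (Fin.snoc (Fin.init t) 1) (Fin.snoc_last _ _)

theorem mem_subtype_iff {x' : A} (g : C(Fin (n + 1) → I, A)) :
    g ∈ RelGenLoop n A (Subtype.val ⁻¹' B) x' ↔
      (⟨Subtype.val, continuous_subtype_val⟩ : C(A, X)).comp g ∈ RelGenLoop n X B x' :=
  and_congr Iff.rfl
    (and_congr (forall₂_congr fun _ _ => Subtype.ext_iff)
      (forall₂_congr fun _ _ => Subtype.ext_iff))

theorem mono (h : B ⊆ A) : RelGenLoop n X B x ⊆ RelGenLoop n X A x :=
  fun _ hf => ⟨fun t ht => h (hf.1 t ht), hf.2⟩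

def mapVal (hx : x ∈ A) : C(RelGenLoop n A (Subtype.val ⁻¹' B) ⟨x, hx⟩, RelGenLoop n X B x) where
  toFun f :=
    ⟨(⟨Subtype.val, continuous_subtype_val⟩ : C(A, X)).comp f.1, (mem_subtype_iff f.1).1 f.2⟩
  continuous_toFun :=
    ((ContinuousMap.continuous_postcomp _).comp continuous_subtype_val).subtype_mk _

@[simp]
theorem mapVal_apply (hx : x ∈ A) (f : RelGenLoop n A (Subtype.val ⁻¹' B) ⟨x, hx⟩)
    (t : Fin (n + 1) → I) : (mapVal hx f).1 t = f.1 t :=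
  rfl

def inclusion (h : B ⊆ A) : C(RelGenLoop n X B x, RelGenLoop n X A x) :=
  ⟨Set.inclusion (mono h), continuous_inclusion _⟩

@[simp]
theorem inclusion_apply (h : B ⊆ A) (f : RelGenLoop n X B x) : (inclusion h f).1 = f.1 :=
  rfl

def face (hx : x ∈ A) (hxB : x ∈ B) :
    C(RelGenLoop (n + 1) X A x, RelGenLoop n A (Subtype.val ⁻¹' B) ⟨x, hx⟩) where
  toFun V := ⟨⟨fun t => ⟨V.1 (Fin.snoc t 0), V.2.1 _ (Fin.snoc_last _ _)⟩, by fun_prop⟩, by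
    have hside : ∀ t, (t (Fin.last n) = 0 ∨ t (Fin.last n) = 1) → V.1 (Fin.snoc t 0) = x :=
      fun t ht => V.2.2.2 _ ⟨Fin.last n, by rwa [Fin.snoc_castSucc]⟩
    refine (mem_subtype_iff _).2
      ⟨fun t ht => (hside t (.inl ht)).symm ▸ hxB, fun t ht => hside t (.inr ht), ?_⟩
    rintro t ⟨i, hi⟩
    exact V.2.2.2 _ ⟨i.castSucc, by rwa [Fin.snoc_castSucc]⟩⟩
  continuous_toFun := by
    refine Continuous.subtype_mk ?_ _
    refine (ContinuousMap.isEmbedding_postcomp ⟨_, continuous_subtype_val⟩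
      Topology.IsEmbedding.subtypeVal).continuous_iff.2 ?_
    exact (ContinuousMap.continuous_precomp
      ⟨fun t : Fin (n + 1) → I => (Fin.snoc t 0 : Fin (n + 2) → I), by fun_prop⟩).comp
        continuous_subtype_val

@[simp]
theorem face_apply (hx : x ∈ A) (hxB : x ∈ B) (V : RelGenLoop (n + 1) X A x)
    (t : Fin (n + 1) → I) : ((face hx hxB V).1 t : X) = V.1 (Fin.snoc t 0) :=
  rfl

theorem mapVal_face_joined_const (hx : x ∈ A) (hxB : x ∈ B) (V : RelGenLoop (n + 1) X A x) :
    Joined (mapVal hx (face hx hxB V)) (const n hxB) := by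
  have hside : ∀ s t, (t (Fin.last n) = 0 ∨ t (Fin.last n) = 1) → V.1 (Fin.snoc t s) = x :=
    fun s t ht => V.2.2.2 _ ⟨Fin.last n, by rwa [Fin.snoc_castSucc]⟩
  refine joined_of_homotopy ⟨fun p => V.1 (Fin.snoc p.2 p.1), by fun_prop⟩
    (fun s => ⟨fun t ht => (hside s t (.inl ht)).symm ▸ hxB, fun t ht => hside s t (.inr ht),
      fun _ ⟨i, hi⟩ => V.2.2.2 _ ⟨i.castSucc, by rwa [Fin.snoc_castSucc]⟩⟩)
    (fun _ => rfl) fun _ => V.2.2.1 _ (Fin.snoc_last _ _)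

theorem inclusion_mapVal_joined_const (hBA : B ⊆ A) (hx : x ∈ A)
    (g : RelGenLoop n A (Subtype.val ⁻¹' B) ⟨x, hx⟩) :
    Joined (inclusion hBA (mapVal hx g)) (const n hx) :=
  joined_const_of_forall_mem hx _ fun t => (g.1 t).2

theorem face_inclusion_joined_const (hBA : B ⊆ A) (hx : x ∈ A) (hxB : x ∈ B)
    (V : RelGenLoop (n + 1) X B x) :
    Joined (face hx hxB (inclusion hBA V)) (const n (A := Subtype.val ⁻¹' B) hxB) :=
  joined_const_of_forall_mem _ _ fun _ => V.2.1 _ (Fin.snoc_last _ _)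

theorem exists_face_joined_of_mapVal_joined_const (hBA : B ⊆ A) (hx : x ∈ A) (hxB : x ∈ B)
    (f : RelGenLoop n A (Subtype.val ⁻¹' B) ⟨x, hx⟩) (h : Joined (mapVal hx f) (const n hxB)) :
    ∃ V : RelGenLoop (n + 1) X A x, Joined (face hx hxB V) f := by
  obtain ⟨K, hK0, hK1, hKB, hKx, hKJ⟩ := relHomotopic_iff_joined.2 h
  have hKA : ∀ r t, K (bend (r, t, 0)) ∈ A := fun r t => by
    rcases bend_bottom r t with h | ⟨t', h⟩
    · exact hBA (hKB _ _ h)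
    · simp [h, hK0]
  let V : C(Fin (n + 2) → I, X) := ⟨fun t => K (bend (1, Fin.init t, t (Fin.last _))), by fun_prop⟩
  have hV : V ∈ RelGenLoop (n + 1) X A x := by
    refine ⟨fun t ht => ?_, fun t ht => ?_, fun t ht => ?_⟩
    · simpa [V, ht] using hKA 1 (Fin.init t)
    · simp [V, ht, bend_top, hK1]
    · rcases (Cube.mem_boundary_fin_succ (t := Fin.init t)).1 ht with ⟨i, hi⟩ | h0 | h1
      · exact hKJ (bend _).1 (bend _).2 ⟨i, by rwa [bend_fst_castSucc]⟩
      · simp [V, bend_of_last_eq_zero _ _ h0, hK1]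
      · simpa [V, bend_of_last_eq_one _ _ h1] using hKx _ _ h1
  refine ⟨⟨V, hV⟩, (joined_of_homotopy (S := RelGenLoop n A (Subtype.val ⁻¹' B) ⟨x, hx⟩)
    ⟨fun p => ⟨K (bend (p.1, p.2, 0)), hKA _ _⟩, by fun_prop⟩
    (fun r => ⟨fun t ht => ?_, fun t ht => ?_, fun t ⟨i, hi⟩ => ?_⟩) (fun t => ?_)
    fun t => ?_).symm⟩
  · simpa [bend_of_last_eq_zero _ _ ht] using hKB t r ht
  · exact Subtype.ext (by simpa [bend_of_last_eq_one _ _ ht] using hKx t 0 ht)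
  · exact Subtype.ext (hKJ (bend _).1 (bend _).2 ⟨i, by rwa [bend_fst_castSucc]⟩)
  · exact Subtype.ext (by simpa [bend_zero] using hK0 t)
  · exact Subtype.ext (by simp [V])

theorem exists_mapVal_joined_of_inclusion_joined_const (hBA : B ⊆ A) (hx : x ∈ A)
    (f : RelGenLoop n X B x) (h : Joined (inclusion hBA f) (const n hx)) :
    ∃ g : RelGenLoop n A (Subtype.val ⁻¹' B) ⟨x, hx⟩, Joined (mapVal hx g) f := by
  obtain ⟨K, hK0, hK1, hKA, hKx, hKJ⟩ := relHomotopic_iff_joined.2 h.symm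
  let P : C(I × (Fin (n + 1) → I), X) := ⟨fun p => K (bend (1, p.2, p.1)), by fun_prop⟩
  have hP : ∀ s, P.curry s ∈ RelGenLoop n X B x := fun s =>
    ⟨fun t ht => by simpa [P, bend_of_last_eq_zero _ _ ht, hK1] using f.2.1 t ht,
     fun t ht => by simpa [P, bend_of_last_eq_one _ _ ht] using hKx t s ht,
     fun t ⟨i, hi⟩ => hKJ (bend (1, t, s)).1 (bend (1, t, s)).2 ⟨i, by rwa [bend_fst_castSucc]⟩⟩
  have hA : ∀ t, P (0, t) ∈ A := fun t => by
    rcases bend_bottom 1 t with h | ⟨t', h⟩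
    · exact hKA _ _ h
    · simpa [P, h, hK0] using hx
  refine ⟨⟨⟨fun t => ⟨P (0, t), hA t⟩, by fun_prop⟩, (mem_subtype_iff _).2 (hP 0)⟩,
    joined_of_homotopy P hP (fun _ => rfl) fun t => ?_⟩
  simp [P, bend_top, hK1]

section Glue

variable (hx : x ∈ A) (hxB : x ∈ B) {V : RelGenLoop (n + 1) X A x}
  (γ : Path (face hx hxB V) (const n hxB))

def glue : C((Fin (n + 1) → I) × ℝ, X) where
  toFun p := if p.2 ≤ 0 then ((γ (proj (-p.2))).1 p.1 : X) else V.1 (Fin.snoc p.1 (proj p.2))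
  continuous_toFun := by
    refine Continuous.if_le (by fun_prop) (by fun_prop) continuous_snd continuous_const
      fun p hp => ?_
    simp [hp]

theorem glue_of_nonpos {c : ℝ} (hc : c ≤ 0) (t : Fin (n + 1) → I) :
    glue hx hxB γ (t, c) = (γ (proj (-c))).1 t := by
  simp [glue, hc]

theorem glue_of_nonneg {c : ℝ} (hc : 0 ≤ c) (t : Fin (n + 1) → I) :
    glue hx hxB γ (t, c) = V.1 (Fin.snoc t (proj c)) := by
  rcases hc.eq_or_lt with rfl | hc
  · simp [glue]
  · simp [glue, hc.not_ge]

theorem glue_mem_of_last_eq_zero {t : Fin (n + 1) → I} (ht : t (Fin.last n) = 0) (c : ℝ) :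
    glue hx hxB γ (t, c) ∈ B := by
  rcases le_total c 0 with hc | hc
  · simpa [glue_of_nonpos hx hxB γ hc] using (γ _).2.1 t ht
  · rw [glue_of_nonneg hx hxB γ hc,
      V.2.2.2 _ ⟨Fin.last n, by rw [Fin.snoc_castSucc]; exact .inl ht⟩]
    exact hxB

theorem glue_of_nonneg_of_mem_boundary {c : ℝ} (hc : 0 ≤ c) {t : Fin (n + 1) → I}
    (ht : t ∈ Cube.boundary (Fin (n + 1))) : glue hx hxB γ (t, c) = x := by
  obtain ⟨i, hi⟩ := ht
  rw [glue_of_nonneg hx hxB γ hc]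
  exact V.2.2.2 _ ⟨i, by rwa [Fin.snoc_castSucc]⟩

theorem glue_one (t : Fin (n + 1) → I) : glue hx hxB γ (t, 1) = x := by
  rw [glue_of_nonneg hx hxB γ zero_le_one, Set.projIcc_right]
  exact V.2.2.1 _ (Fin.snoc_last _ _)

theorem glue_of_last_eq_one {t : Fin (n + 1) → I} (ht : t (Fin.last n) = 1) (c : ℝ) :
    glue hx hxB γ (t, c) = x := by
  rcases le_total c 0 with hc | hc
  · simpa [glue_of_nonpos hx hxB γ hc] using congrArg Subtype.val ((γ _).2.2.1 t ht)
  · exact glue_of_nonneg_of_mem_boundary hx hxB γ hc ⟨Fin.last n, .inr ht⟩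

theorem glue_of_init_mem_boundary {t : Fin (n + 1) → I}
    (ht : Fin.init t ∈ Cube.boundary (Fin n)) (c : ℝ) : glue hx hxB γ (t, c) = x := by
  rcases le_total c 0 with hc | hc
  · simpa [glue_of_nonpos hx hxB γ hc] using congrArg Subtype.val ((γ _).2.2.2 t ht)
  · exact glue_of_nonneg_of_mem_boundary hx hxB γ hc (Cube.mem_boundary_fin_succ.2 (.inl ht))

/-- The `c`-axis is stretched downwards so that at `r = 1` the bent bottom edge lands in the part
of `glue` coming from `γ`. -/
def bendGlue : C(I × (Fin (n + 2) → I), X) where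
  toFun p := glue hx hxB γ ((bend (p.1, Fin.init p.2, p.2 (Fin.last _))).1,
    (bend (p.1, Fin.init p.2, p.2 (Fin.last _))).2 -
      p.1 * (1 - (bend (p.1, Fin.init p.2, p.2 (Fin.last _))).2))
  continuous_toFun := (glue hx hxB γ).continuous.comp (by fun_prop)

theorem bendGlue_zero (t : Fin (n + 2) → I) : bendGlue hx hxB γ (0, t) = V.1 t := by
  simp only [bendGlue, ContinuousMap.coe_mk, bend_zero, Set.Icc.coe_zero, zero_mul, sub_zero]
  rw [glue_of_nonneg hx hxB γ (t _).2.1, Set.projIcc_val, Fin.snoc_init_self]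

theorem bendGlue_of_last_eq_zero (r : I) {t : Fin (n + 2) → I} (ht : t (Fin.last _) = 0) :
    bendGlue hx hxB γ (r, t) ∈ B ∨ ∃ t', bendGlue hx hxB γ (r, t) = (γ r).1 t' := by
  rcases bend_bottom r (Fin.init t) with h | ⟨t', h⟩
  · left
    simp only [bendGlue, ContinuousMap.coe_mk, ht]
    exact glue_mem_of_last_eq_zero hx hxB γ h _
  · right
    refine ⟨t', ?_⟩
    simp only [bendGlue, ContinuousMap.coe_mk, ht, h, Set.Icc.coe_zero, sub_zero, mul_one, zero_sub]
    rw [glue_of_nonpos hx hxB γ (neg_nonpos.2 r.2.1), neg_neg, Set.projIcc_val]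

theorem bendGlue_of_last_eq_one (r : I) {t : Fin (n + 2) → I} (ht : t (Fin.last _) = 1) :
    bendGlue hx hxB γ (r, t) = x := by
  simp only [bendGlue, ContinuousMap.coe_mk, ht, bend_top, Set.Icc.coe_one, sub_self, mul_zero,
    sub_zero]
  exact glue_one hx hxB γ _

theorem bendGlue_of_mem_boundary (r : I) {t : Fin (n + 2) → I}
    (ht : Fin.init t ∈ Cube.boundary (Fin (n + 1))) : bendGlue hx hxB γ (r, t) = x := by
  rcases Cube.mem_boundary_fin_succ.1 ht with hJ | h0 | h1
  · exact glue_of_init_mem_boundary hx hxB γ (by rwa [init_bend_fst]) _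
  · have hc : (0 : ℝ) ≤ convexComb r 1 (t (Fin.last _)) -
        r * (1 - convexComb r 1 (t (Fin.last _))) := by
      simp only [Set.Icc.coe_convexComb, Set.Icc.coe_one]
      nlinarith [mul_nonneg (mul_nonneg r.2.1 r.2.1) (sub_nonneg.2 (t (Fin.last _)).2.2),
        (t (Fin.last _)).2.1]
    simp only [bendGlue, ContinuousMap.coe_mk, bend_of_last_eq_zero _ _ h0]
    exact glue_of_nonneg_of_mem_boundary hx hxB γ hc ⟨Fin.last n, .inl h0⟩
  · simp only [bendGlue, ContinuousMap.coe_mk, bend_of_last_eq_one _ _ h1]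
    exact glue_of_last_eq_one hx hxB γ h1 _

theorem bendGlue_mem (hBA : B ⊆ A) (r : I) :
    (bendGlue hx hxB γ).curry r ∈ RelGenLoop (n + 1) X A x := by
  refine ⟨fun t ht => ?_, fun t => bendGlue_of_last_eq_one hx hxB γ r,
    fun t => bendGlue_of_mem_boundary hx hxB γ r⟩
  rcases bendGlue_of_last_eq_zero hx hxB γ r ht with h | ⟨t', h⟩
  · exact hBA h
  · simp [h]

theorem bendGlue_one_mem : (bendGlue hx hxB γ).curry 1 ∈ RelGenLoop (n + 1) X B x := by
  refine ⟨fun t ht => ?_, fun t => bendGlue_of_last_eq_one hx hxB γ 1,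
    fun t => bendGlue_of_mem_boundary hx hxB γ 1⟩
  rcases bendGlue_of_last_eq_zero hx hxB γ 1 ht with h | ⟨t', h⟩
  · exact h
  · simpa [h] using hxB

end Glue

theorem exists_inclusion_joined_of_face_joined_const (hBA : B ⊆ A) (hx : x ∈ A) (hxB : x ∈ B)
    (V : RelGenLoop (n + 1) X A x)
    (h : Joined (face hx hxB V) (const n (A := Subtype.val ⁻¹' B) hxB)) :
    ∃ F : RelGenLoop (n + 1) X B x, Joined (inclusion hBA F) V := by
  obtain ⟨γ⟩ := h
  exact ⟨⟨_, bendGlue_one_mem hx hxB γ⟩, (joined_of_homotopy (bendGlue hx hxB γ)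
    (bendGlue_mem hx hxB γ hBA) (bendGlue_zero hx hxB γ) fun _ => rfl).symm⟩

end RelGenLoop

namespace RelHomotopyGroup

open RelGenLoop

section

variable {n : ℕ} {X : Type} [TopologicalSpace X] {A : Set X} {x : X}

theorem mk_eq_mk_iff {f g : RelGenLoop n X A x} :
    (Quot.mk _ f : RelHomotopyGroup n X A x) = Quot.mk _ g ↔ Joined f g := by
  have h : @RelHomotopic n X _ A x = Joined := by
    ext
    exact relHomotopic_iff_joined
  rw [Quot.eq, h]
  exact (pathSetoid _).iseqv.eqvGen_iff

variable {m : ℕ} {Y : Type} [TopologicalSpace Y] {B : Set Y} {y : Y}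

def map (Φ : C(RelGenLoop n X A x, RelGenLoop m Y B y)) :
    RelHomotopyGroup n X A x → RelHomotopyGroup m Y B y :=
  Quot.map Φ fun _ _ h => relHomotopic_iff_joined.2 ((relHomotopic_iff_joined.1 h).map Φ.continuous)

theorem continuous_map (Φ : C(RelGenLoop n X A x, RelGenLoop m Y B y)) : Continuous (map Φ) :=
  continuous_quot_lift _ (continuous_quot_mk.comp Φ.continuous)

end

variable {n₁ n₂ n₃ : ℕ} {X₁ X₂ X₃ : Type} [TopologicalSpace X₁] [TopologicalSpace X₂]
  [TopologicalSpace X₃] {A₁ : Set X₁} {A₂ : Set X₂} {A₃ : Set X₃} {x₁ : X₁} {x₂ : X₂} {x₃ : X₃}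

theorem exists_const_map_eq_iff (Φ : C(RelGenLoop n₁ X₁ A₁ x₁, RelGenLoop n₂ X₂ A₂ x₂))
    (Ψ : C(RelGenLoop n₂ X₂ A₂ x₂, RelGenLoop n₃ X₃ A₃ x₃)) (hx₃ : x₃ ∈ A₃)
    (hΨΦ : ∀ v, Joined (Ψ (Φ v)) (const n₃ hx₃))
    (hker : ∀ f, Joined (Ψ f) (const n₃ hx₃) → ∃ v, Joined (Φ v) f)
    (u : RelHomotopyGroup n₂ X₂ A₂ x₂) :
    (∃ c : RelGenLoop n₃ X₃ A₃ x₃, (∀ t, c.1 t = x₃) ∧ map Ψ u = Quot.mk _ c) ↔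
      ∃ v, map Φ v = u := by
  induction u using Quot.ind with | mk f => ?_
  constructor
  · rintro ⟨c, hc, hΨ⟩
    obtain rfl : c = const n₃ hx₃ := Subtype.ext (ContinuousMap.ext hc)
    obtain ⟨v, hv⟩ := hker f (mk_eq_mk_iff.1 hΨ)
    exact ⟨Quot.mk _ v, mk_eq_mk_iff.2 hv⟩
  · rintro ⟨v, hv⟩
    induction v using Quot.ind with | mk v => ?_
    rw [← hv]
    exact ⟨_, fun _ => rfl, mk_eq_mk_iff.2 (hΨΦ v)⟩

end RelHomotopyGroup

/-- For pointed spaces `B ⊆ A ⊆ X` (based at `x ∈ B`) there is a long exact sequence of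
the triple in the category of quasitopological groups
`⋯ → π_{n+1}^{qtop}(X,A) → πₙ^{qtop}(A,B) → πₙ^{qtop}(X,B) → πₙ^{qtop}(X,A) →
π_{n-1}^{qtop}(A,B) → ⋯`, with all maps continuous.  (Here `RelHomotopyGroup n`
is `π_{n+1}^{qtop}` and all relative groups carry the quotient topology.)  The maps are
pinned down on representatives: the first two are induced by inclusions, and the
connecting map restricts a relative loop to the face lying in `A`; exactness holds at
every spot, the trivial class being represented by the constant loop. -/
theorem stmt14 (X : Type) [TopologicalSpace X] (A B : Set X) (hBA : B ⊆ A)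
    (x : X) (hxB : x ∈ B) :
    ∃ (α : ∀ n : ℕ, RelHomotopyGroup n A (Subtype.val ⁻¹' B) ⟨x, hBA hxB⟩ →
          RelHomotopyGroup n X B x)
      (β : ∀ n : ℕ, RelHomotopyGroup n X B x → RelHomotopyGroup n X A x)
      (bd : ∀ n : ℕ, RelHomotopyGroup (n + 1) X A x →
          RelHomotopyGroup n A (Subtype.val ⁻¹' B) ⟨x, hBA hxB⟩),
      (∀ n, Continuous (α n)) ∧ (∀ n, Continuous (β n)) ∧ (∀ n, Continuous (bd n)) ∧
      -- `α` is induced by the inclusion `(A,B) ↪ (X,B)`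
      (∀ (n : ℕ) (f : RelGenLoop n A (Subtype.val ⁻¹' B) ⟨x, hBA hxB⟩)
        (g : RelGenLoop n X B x),
        (∀ t, g.1 t = (f.1 t : X)) → α n (Quot.mk _ f) = Quot.mk _ g) ∧
      -- `β` is induced by the inclusion `(X,B) ↪ (X,A)`
      (∀ (n : ℕ) (f : RelGenLoop n X B x) (g : RelGenLoop n X A x),
        (∀ t, g.1 t = f.1 t) → β n (Quot.mk _ f) = Quot.mk _ g) ∧
      -- `bd` restricts a relative loop to its face lying in `A`
      (∀ (n : ℕ) (f : RelGenLoop (n + 1) X A x)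
        (g : RelGenLoop n A (Subtype.val ⁻¹' B) ⟨x, hBA hxB⟩),
        (∀ t : Fin (n + 1) → I, (g.1 t : X) = f.1 (Fin.snoc t 0)) →
        bd n (Quot.mk _ f) = Quot.mk _ g) ∧
      -- exactness at `πₙ^{qtop}(A,B)`
      (∀ (n : ℕ) (u : RelHomotopyGroup n A (Subtype.val ⁻¹' B) ⟨x, hBA hxB⟩),
        (∃ c : RelGenLoop n X B x, (∀ t, c.1 t = x) ∧ α n u = Quot.mk _ c) ↔
          ∃ v, bd n v = u) ∧
      -- exactness at `πₙ^{qtop}(X,B)`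
      (∀ (n : ℕ) (u : RelHomotopyGroup n X B x),
        (∃ c : RelGenLoop n X A x, (∀ t, c.1 t = x) ∧ β n u = Quot.mk _ c) ↔
          ∃ v, α n v = u) ∧
      -- exactness at `π_{n+2}^{qtop}(X,A)`
      ∀ (n : ℕ) (u : RelHomotopyGroup (n + 1) X A x),
        (∃ c : RelGenLoop n A (Subtype.val ⁻¹' B) ⟨x, hBA hxB⟩,
          (∀ t, (c.1 t : X) = x) ∧ bd n u = Quot.mk _ c) ↔
          ∃ v, β (n + 1) v = u := by
  have hxA := hBA hxB
  refine ⟨fun n => RelHomotopyGroup.map (RelGenLoop.mapVal hxA),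
    fun n => RelHomotopyGroup.map (RelGenLoop.inclusion hBA),
    fun n => RelHomotopyGroup.map (RelGenLoop.face hxA hxB),
    fun n => RelHomotopyGroup.continuous_map _, fun n => RelHomotopyGroup.continuous_map _,
    fun n => RelHomotopyGroup.continuous_map _,
    fun n f g hfg => congrArg (Quot.mk _) (Subtype.ext (ContinuousMap.ext fun t => (hfg t).symm)),
    fun n f g hfg => congrArg (Quot.mk _) (Subtype.ext (ContinuousMap.ext fun t => (hfg t).symm)),
    fun n f g hfg => congrArg (Quot.mk _)
      (Subtype.ext (ContinuousMap.ext fun t => Subtype.ext (hfg t).symm)),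
    fun n => RelHomotopyGroup.exists_const_map_eq_iff _ _ hxB
      (RelGenLoop.mapVal_face_joined_const hxA hxB)
      (RelGenLoop.exists_face_joined_of_mapVal_joined_const hBA hxA hxB),
    fun n => RelHomotopyGroup.exists_const_map_eq_iff _ _ hxA
      (RelGenLoop.inclusion_mapVal_joined_const hBA hxA)
      (RelGenLoop.exists_mapVal_joined_of_inclusion_joined_const hBA hxA),
    fun n u => ?_⟩
  rw [← RelHomotopyGroup.exists_const_map_eq_iff _ _ (x₃ := (⟨x, hxA⟩ : A)) hxB
    (RelGenLoop.face_inclusion_joined_const hBA hxA hxB)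
    (RelGenLoop.exists_inclusion_joined_of_face_joined_const hBA hxA hxB)]
  exact exists_congr fun c => and_congr_left'
    (forall_congr' fun _ => ⟨fun h => Subtype.ext h, fun h => congrArg Subtype.val h⟩)
end
end

section
/- If p : \tilde{X} → X is a covering projection of path-connected spaces, then for all n ≥ 2 the induced map p_* : π_n^{qtop}(\tilde{X}) → π_n^{qtop}(X) is an isomorphism of quasitopological groups. -/
open Topology.Homotopy unitInterval

noncomputable section

/-!
A covering map has the homotopy lifting property. Lifting the evaluation map
`I^N × Ω^N X → X` one cube coordinate at a time gives a continuous section of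
`p_* : Ω^N E → Ω^N X`; its values are again based loops because `∂I^N` is connected once
`N` has two elements. Homotopies rel `∂I^N` lift too, so `p_*` is injective on homotopy
classes, and the section descends to a continuous inverse of `p_*` on `π_N`.
-/

open Set Topology

namespace GenLoop

variable {N X Y : Type*} [TopologicalSpace X] [TopologicalSpace Y] {x : X}

def map (f : C(X, Y)) (γ : Ω^ N X x) : Ω^ N Y (f x) :=
  ⟨f.comp γ, fun y hy => by simp [GenLoop.boundary γ y hy]⟩

@[simp]
theorem map_apply (f : C(X, Y)) (γ : Ω^ N X x) (y : I^N) : map f γ y = f (γ y) := rfl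

theorem continuous_map (f : C(X, Y)) : Continuous (map f : Ω^ N X x → Ω^ N Y (f x)) :=
  ((ContinuousMap.continuous_postcomp f).comp continuous_subtype_val).subtype_mk _

theorem Homotopic.map (f : C(X, Y)) {γ δ : Ω^ N X x} (h : Homotopic γ δ) :
    Homotopic (GenLoop.map f γ) (GenLoop.map f δ) :=
  Nonempty.map (fun H => H.compContinuousMap f) h

theorem map_transAt [DecidableEq N] (f : C(X, Y)) (i : N) (γ δ : Ω^ N X x) :
    map f (transAt i γ δ) = transAt i (map f γ) (map f δ) := by
  ext y
  simp only [map_apply, transAt, coe_copy]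
  exact apply_ite f _ _ _

end GenLoop

namespace HomotopyGroup

variable {N X Y : Type*} [TopologicalSpace X] [TopologicalSpace Y] {x : X}

def map (f : C(X, Y)) : HomotopyGroup N X x → HomotopyGroup N Y (f x) :=
  Quotient.map' (GenLoop.map f) fun _ _ => GenLoop.Homotopic.map f

@[simp]
theorem map_mk (f : C(X, Y)) (γ : Ω^ N X x) : map f ⟦γ⟧ = ⟦GenLoop.map f γ⟧ := rfl

theorem continuous_map (f : C(X, Y)) : Continuous (map f : HomotopyGroup N X x → _) :=
  (GenLoop.continuous_map f).quotient_map' _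

theorem map_mul [DecidableEq N] [Nonempty N] (f : C(X, Y)) (a b : HomotopyGroup N X x) :
    map f (a * b) = map f a * map f b := by
  induction a using Quotient.inductionOn
  induction b using Quotient.inductionOn
  simp only [mul_spec (i := Classical.arbitrary N), map_mk, GenLoop.map_transAt]
  rfl

end HomotopyGroup

theorem Cube.zero_mem_boundary (N : Type*) [Nonempty N] : (0 : I^N) ∈ Cube.boundary N :=
  ⟨Classical.arbitrary N, .inl rfl⟩

theorem Cube.isPreconnected_setOf_apply_eq {N : Type*} (i : N) (c : I) :
    IsPreconnected {y : I^N | y i = c} := by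
  classical
  have : {y : I^N | y i = c} = univ.pi (Function.update (fun _ => (univ : Set I)) i {c}) := by
    ext y
    simp only [mem_ofPred_eq, mem_univ_pi]
    refine ⟨fun hy j => ?_, fun hy => by simpa using hy i⟩
    rcases eq_or_ne j i with rfl | hj <;> simp [*]
  rw [this]
  refine isPreconnected_univ_pi fun j => ?_
  rcases eq_or_ne j i with rfl | hj
  · simpa using isPreconnected_singleton
  · simpa [hj] using isPreconnected_univ

theorem Cube.isPreconnected_boundary (N : Type*) [Nontrivial N] :
    IsPreconnected (Cube.boundary N) := by
  classical
  have face_sub : ∀ i (c : I), (c = 0 ∨ c = 1) → {y : I^N | y i = c} ⊆ boundary N :=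
    fun i c hc y hy => ⟨i, hy ▸ hc⟩
  refine isPreconnected_of_forall 0 ?_
  rintro y ⟨i, hy | hy⟩
  · exact ⟨_, face_sub i 0 (.inl rfl), rfl, hy, isPreconnected_setOf_apply_eq i 0⟩
  · obtain ⟨j, hj⟩ := exists_ne i
    refine ⟨_, union_subset (face_sub j 0 (.inl rfl)) (face_sub i 1 (.inr rfl)), .inl rfl, .inr hy,
      (isPreconnected_setOf_apply_eq j 0).union (Function.update (0 : I^N) i 1) ?_ ?_
        (isPreconnected_setOf_apply_eq i 1)⟩
    · simp [hj]
    · simp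

namespace IsCoveringMap

variable {E X : Type*} [TopologicalSpace E] [TopologicalSpace X] {p : E → X}

theorem exists_lift_cube (cov : IsCoveringMap p) {A : Type*} [TopologicalSpace A]
    (N : Type*) [Finite N] (f : C((I^N) × A, X)) (g₀ : C(A, E)) (hf : ∀ a, f (0, a) = p (g₀ a)) :
    ∃ g : C((I^N) × A, E), p ∘ g = f ∧ ∀ a, g (0, a) = g₀ a := by
  classical
  induction h : Nat.card N generalizing N with
  | zero =>
    have : IsEmpty N := Finite.card_eq_zero_iff.mp h
    refine ⟨g₀.comp .snd, funext fun ⟨y, a⟩ => ?_, fun _ => rfl⟩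
    simp [Subsingleton.elim y 0, hf]
  | succ n ih =>
    obtain ⟨i⟩ : Nonempty N := Finite.card_pos_iff.mp (by omega)
    -- Lift on the face `y i = 0` by induction, then along the `i`-th coordinate as a homotopy.
    let Φ : I × ((I^{j // j ≠ i}) × A) ≃ₜ (I^N) × A :=
      (Homeomorph.prodAssoc _ _ _).symm.trans ((Cube.insertAt i).prodCongr (.refl A))
    have hΦ : ∀ a, Φ.symm (0, a) = (0, 0, a) := fun a => rfl
    obtain ⟨g₁, hg₁, hg₁0⟩ := ih {j // j ≠ i} (f.comp ⟨fun z => Φ (0, z), by fun_prop⟩)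
      (fun a => by simpa [← hΦ] using hf a) (by
        have := Nat.card_congr (Equiv.optionSubtypeNe i)
        rw [Finite.card_option] at this
        omega)
    have H₀ : ∀ z, f.comp (Φ : C(_, _)) ((0 : I), z) = p (g₁ z) := fun z => by
      simpa using (congrFun hg₁ z).symm
    refine ⟨(cov.liftHomotopy (f.comp (Φ : C(_, _))) g₁ H₀).comp (Φ.symm : C(_, _)), ?_,
      fun a => ?_⟩
    · ext z
      simpa using congrFun (cov.liftHomotopy_lifts _ _ H₀) (Φ.symm z)
    · change cov.liftHomotopy _ g₁ H₀ (Φ.symm (0, a)) = g₀ a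
      rw [hΦ, liftHomotopy_zero, hg₁0]

theorem homotopic_genLoopMap_iff (cov : IsCoveringMap p) {N : Type*} [Nonempty N] {e : E}
    {γ δ : Ω^ N E e} :
    GenLoop.Homotopic (GenLoop.map ⟨p, cov.continuous⟩ γ) (GenLoop.map ⟨p, cov.continuous⟩ δ) ↔
      GenLoop.Homotopic γ δ :=
  have h0 := Cube.zero_mem_boundary N
  (cov.homotopicRel_iff_comp
    ⟨0, h0, (GenLoop.boundary γ 0 h0).trans (GenLoop.boundary δ 0 h0).symm⟩).symm

theorem exists_continuous_section_genLoopMap (cov : IsCoveringMap p) (N : Type*) [Finite N]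
    [Nontrivial N] (e : E) :
    ∃ s : C(Ω^ N X (p e), Ω^ N E e), ∀ δ, GenLoop.map ⟨p, cov.continuous⟩ (s δ) = δ := by
  have h0 := Cube.zero_mem_boundary N
  obtain ⟨g, hg, hg0⟩ := cov.exists_lift_cube N (A := Ω^ N X (p e))
    ⟨fun z => z.2 z.1, continuous_eval.comp continuous_swap⟩ (.const _ e)
    fun δ => GenLoop.boundary δ 0 h0
  have hlift : ∀ y (δ : Ω^ N X (p e)), p (g (y, δ)) = δ y := fun y δ => congrFun hg (y, δ)
  have hbd : ∀ δ, ∀ y ∈ Cube.boundary N, g (y, δ) = e := fun δ y hy =>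
    (cov.constOn_of_comp (Cube.isPreconnected_boundary N)
      (g.continuous.comp (.prodMk_left δ)).continuousOn
      (fun y hy y' hy' => by
        simp only [Function.comp_apply, hlift, GenLoop.boundary δ y hy, GenLoop.boundary δ y' hy'])
      hy h0).trans (hg0 δ)
  refine ⟨⟨fun δ => ⟨(g.comp .prodSwap).curry δ, hbd δ⟩, ?_⟩, fun δ => ?_⟩
  · exact (g.comp .prodSwap).curry.continuous.subtype_mk _
  · ext y
    exact hlift y δ

theorem isHomeomorph_homotopyGroupMap (cov : IsCoveringMap p) (N : Type*) [Finite N]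
    [Nontrivial N] (e : E) :
    IsHomeomorph (HomotopyGroup.map (N := N) (x := e) ⟨p, cov.continuous⟩) := by
  obtain ⟨s, hs⟩ := cov.exists_continuous_section_genLoopMap N e
  refine isHomeomorph_iff_exists_inverse.mpr ⟨HomotopyGroup.continuous_map _,
    Quotient.map' s fun δ₁ δ₂ h => cov.homotopic_genLoopMap_iff.mp (by rwa [hs, hs]), ?_, ?_,
    s.continuous.quotient_map' _⟩
  · rintro ⟨γ⟩
    exact Quotient.sound (cov.homotopic_genLoopMap_iff.mp (by rw [hs]))
  · rintro ⟨δ⟩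
    exact congrArg _ (hs δ)

end IsCoveringMap

theorem stmt17_general (E X : Type) [TopologicalSpace E] [TopologicalSpace X]
    (p : E → X) (hp : IsCoveringMap p) (e₀ : E) (m : ℕ) :
    ∃ P : HomotopyGroup (Fin (m + 2)) E e₀ ≃ HomotopyGroup (Fin (m + 2)) X (p e₀),
      (∀ (γ : GenLoop (Fin (m + 2)) E e₀) (δ : GenLoop (Fin (m + 2)) X (p e₀)),
        (∀ t, δ t = p (γ t)) → P ⟦γ⟧ = ⟦δ⟧) ∧
      (∀ a b, P (a * b) = P a * P b) ∧ IsHomeomorph P := by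
  have h := hp.isHomeomorph_homotopyGroupMap (Fin (m + 2)) e₀
  refine ⟨Equiv.ofBijective _ h.bijective, fun γ δ hδ => ?_, HomotopyGroup.map_mul _, h⟩
  exact congrArg _ (GenLoop.ext _ _ fun t => (hδ t).symm)

/-- If `p : X̃ → X` is a covering projection of path-connected spaces, then for all
`n ≥ 2` (written `n = m + 2`) the induced map `p_* : πₙ^{qtop}(X̃) → πₙ^{qtop}(X)`
(given on representatives by post-composition with `p`) is an isomorphism of
quasitopological groups: a group isomorphism which is a homeomorphism. -/
theorem stmt17 (E X : Type) [TopologicalSpace E] [TopologicalSpace X]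
    [PathConnectedSpace E] [PathConnectedSpace X]
    (p : E → X) (hp : IsCoveringMap p) (e₀ : E) (m : ℕ) :
    ∃ P : HomotopyGroup (Fin (m + 2)) E e₀ ≃ HomotopyGroup (Fin (m + 2)) X (p e₀),
      (∀ (γ : GenLoop (Fin (m + 2)) E e₀) (δ : GenLoop (Fin (m + 2)) X (p e₀)),
        (∀ t, δ t = p (γ t)) → P ⟦γ⟧ = ⟦δ⟧) ∧
      (∀ a b, P (a * b) = P a * P b) ∧ IsHomeomorph P :=
  stmt17_general E X p hp e₀ m
end
end
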